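/- arXiv:1308.0510 — 2 statements merged into one kernel-verified Lean document; each statement's English description precedes it below -/
import Mathlib

section
/- Let τ ∈ {−,0,+}^R be a sign vector and let E_τ be a set of representative elementary flux modes conforming to τ (one representative per positive ray). Then every flux mode f ∈ C with σ(f) ≤ τ is a nonnegative linear combination of elements of E_τ: f = Σ_{e∈E_τ} α_e e with α_e ≥ 0. -/
def fluxCone {S R : Type*} [Fintype R] (N : Matrix S R ℝ) (Rirr : Set R) :
    Set (R → ℝ) :=
  {f | N.mulVec f = 0 ∧ ∀ r ∈ Rirr, 0 ≤ f r}

def IsEFM {S R : Type*} [Fintype R] (N : Matrix S R ℝ) (Rirr : Set R)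
    (e : R → ℝ) : Prop :=
  e ∈ fluxCone N Rirr ∧ e ≠ 0 ∧
    ∀ g ∈ fluxCone N Rirr, g ≠ 0 →
      Function.support g ⊆ Function.support e →
      Function.support g = Function.support e

/-- `x` conforms to the sign vector `τ : R → SignType`. -/
def ConformsSign {R : Type*} (x : R → ℝ) (τ : R → SignType) : Prop :=
  ∀ r, x r = 0 ∨ (0 < x r ∧ τ r = 1) ∨ (x r < 0 ∧ τ r = -1)

/-!
Peel off EFMs one at a time. A conformal element of `C` of minimal support is elementary: given
`g ∈ C` of strictly smaller support, subtracting the right multiple of `±g` would produce a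
conformal element of `C` of even smaller support. So a nonzero `f ∈ C` has a conformal EFM `e`,
and subtracting the largest multiple `t • e` that keeps `f - t • e` conformal to `f` kills a
coordinate; `f - t • e` still lies in `C` and conforms to `τ`, so induction on the support
applies. Conformity of `g` to `f` is expressed as `ConformsSign g (sign ∘ f)`.
-/

open Function SignType
open scoped Matrix

theorem div_pos_of_sign_eq {α : Type*} [Field α] [LinearOrder α] [IsStrictOrderedRing α]
    {a b : α} (hb : b ≠ 0) (h : sign b = sign a) : 0 < a / b := by
  rcases hb.lt_or_gt with hb | hb
  · rw [sign_neg hb, eq_comm, sign_eq_neg_one_iff] at h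
    exact div_pos_of_neg_of_neg h hb
  · rw [sign_pos hb, eq_comm, sign_eq_one_iff] at h
    exact div_pos h hb

section Conformity

variable {R : Type*}

theorem conformsSign_iff {x : R → ℝ} {τ : R → SignType} :
    ConformsSign x τ ↔ ∀ r, x r ≠ 0 → sign (x r) = τ r := by
  refine forall_congr' fun r => ?_
  rcases lt_trichotomy (x r) 0 with h | h | h
  · simp [h, h.ne, sign_neg h, eq_comm, h.not_gt]
  · simp [h]
  · simp [h, h.ne', sign_pos h, eq_comm, h.not_gt]

theorem conformsSign_sign (f : R → ℝ) : ConformsSign f (sign ∘ f) :=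
  conformsSign_iff.2 fun _ _ => rfl

theorem ConformsSign.support_subset {g f : R → ℝ} (hg : ConformsSign g (sign ∘ f)) :
    support g ⊆ support f := fun r hr => by
  have hsign : sign (g r) = sign (f r) := conformsSign_iff.1 hg r hr
  exact sign_ne_zero.1 (hsign ▸ sign_ne_zero.2 hr)

theorem ConformsSign.trans {g f : R → ℝ} {τ : R → SignType} (hg : ConformsSign g (sign ∘ f))
    (hf : ConformsSign f τ) : ConformsSign g τ :=
  conformsSign_iff.2 fun r hr =>
    (conformsSign_iff.1 hg r hr).trans (conformsSign_iff.1 hf r (hg.support_subset hr))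

theorem ConformsSign.mem_fluxCone {S : Type*} [Fintype R] {N : Matrix S R ℝ} {Rirr : Set R}
    {g f : R → ℝ} (hg : ConformsSign g (sign ∘ f)) (hf : f ∈ fluxCone N Rirr)
    (hNg : N *ᵥ g = 0) : g ∈ fluxCone N Rirr := by
  refine ⟨hNg, fun r hr => ?_⟩
  by_contra! hneg
  have hsign : sign (g r) = sign (f r) := conformsSign_iff.1 hg r hneg.ne
  rw [sign_neg hneg, eq_comm, sign_eq_neg_one_iff] at hsign
  exact (hf.2 r hr).not_gt hsign

end Conformity

theorem exists_pos_conformsSign_sub_smul {R : Type*} [Finite R] {f g : R → ℝ}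
    (hsupp : support g ⊆ support f) (hpos : ∃ r, 0 < f r / g r) :
    ∃ t : ℝ, 0 < t ∧ ConformsSign (f - t • g) (sign ∘ f) ∧ support (f - t • g) ⊂ support f := by
  obtain ⟨r₀, hr₀, hmin⟩ := Set.exists_min_image {r | 0 < f r / g r} (fun r => f r / g r)
    (Set.toFinite _) hpos
  set t := f r₀ / g r₀
  have ht : 0 < t := hr₀
  have hg₀ : g r₀ ≠ 0 := fun h => by simp [t, h] at ht
  have hconf : ConformsSign (f - t • g) (sign ∘ f) := by
    refine conformsSign_iff.2 fun r hr => ?_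
    by_cases hg : g r = 0
    · simp [hg]
    set ρ := f r / g r
    have hf : f r = ρ * g r := (div_mul_cancel₀ _ hg).symm
    have hsub : (f - t • g) r = (ρ - t) * g r := by
      rw [Pi.sub_apply, Pi.smul_apply, smul_eq_mul, hf]
      ring
    have hρ : ρ ≠ 0 := div_ne_zero (hsupp hg) hg
    have hρt : ρ - t ≠ 0 := left_ne_zero_of_mul (hsub ▸ hr)
    -- `t` is the least positive ratio, so subtracting it never flips the sign of a ratio
    have hsign : sign (ρ - t) = sign ρ := by
      rcases hρ.lt_or_gt with hneg | hpos
      · rw [sign_neg hneg, sign_neg (by linarith)]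
      · have : t < ρ := (hmin r hpos).lt_of_ne (sub_ne_zero.1 hρt).symm
        rw [sign_pos hpos, sign_pos (by linarith)]
    simp only [comp_apply, hsub, hf, sign_mul, hsign]
  refine ⟨t, ht, hconf, (Set.ssubset_iff_of_subset hconf.support_subset).2 ⟨r₀, ?_, ?_⟩⟩
  · exact (div_pos_iff.1 ht).elim (fun h => h.1.ne') (fun h => h.1.ne)
  · simp [t, div_mul_cancel₀ _ hg₀]

theorem exists_nonneg_sum_smul_of_mem_hull {M : Type*} [AddCommMonoid M] [Module ℝ M]
    {E : Finset M} {x : M} (hx : x ∈ PointedCone.hull ℝ (E : Set M)) :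
    ∃ α : M → ℝ, (∀ e ∈ E, 0 ≤ α e) ∧ x = ∑ e ∈ E, α e • e := by
  obtain ⟨α, -, rfl⟩ := Submodule.mem_span_finset.1 hx
  exact ⟨fun e => α e, fun e _ => (α e).2, by simp⟩

section FluxCone

variable {S R : Type*} [Fintype R] {N : Matrix S R ℝ} {Rirr : Set R}

theorem exists_isEFM_conformsSign {f : R → ℝ} (hf : f ∈ fluxCone N Rirr) (hf0 : f ≠ 0) :
    ∃ e, IsEFM N Rirr e ∧ ConformsSign e (sign ∘ f) := by
  obtain ⟨e, ⟨he, he0, hef⟩, hmin⟩ := exists_minimalFor_of_wellFoundedLT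
    (fun g => g ∈ fluxCone N Rirr ∧ g ≠ 0 ∧ ConformsSign g (sign ∘ f)) support
    ⟨f, hf, hf0, conformsSign_sign f⟩
  refine ⟨e, ⟨he, he0, fun g hg hg0 hge => ?_⟩, hef⟩
  by_contra hne
  obtain ⟨r₁, hr₁e, hr₁g⟩ := Set.exists_of_ssubset (hge.ssubset_of_ne hne)
  obtain ⟨g', hNg', hg'g, hpos⟩ :
      ∃ g', N *ᵥ g' = 0 ∧ support g' = support g ∧ ∃ r, 0 < e r / g' r := by
    obtain ⟨r, hr⟩ := Function.ne_iff.1 hg0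
    rcases (div_ne_zero (hge hr) hr).lt_or_gt with hneg | hpos
    · exact ⟨-g, by rw [Matrix.mulVec_neg, hg.1, neg_zero], support_neg g, r,
        by rwa [Pi.neg_apply, div_neg, neg_pos]⟩
    · exact ⟨g, hg.1, rfl, r, hpos⟩
  obtain ⟨t, -, hconf, hlt⟩ := exists_pos_conformsSign_sub_smul (hg'g ▸ hge) hpos
  have hmem : e - t • g' ∈ fluxCone N Rirr :=
    hconf.mem_fluxCone he (by simp [Matrix.mulVec_sub, Matrix.mulVec_smul, he.1, hNg'])
  have hg'r₁ : g' r₁ = 0 := notMem_support.1 (hg'g ▸ hr₁g)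
  have hne0 : e - t • g' ≠ 0 := Function.ne_iff.2 ⟨r₁, by simpa [hg'r₁] using hr₁e⟩
  exact hlt.not_ge (hmin ⟨hmem, hne0, hconf.trans hef⟩ hlt.le)

theorem mem_hull_of_conformsSign {τ : R → SignType} {E : Set (R → ℝ)}
    (hrep : ∀ e, IsEFM N Rirr e → ConformsSign e τ → ∃ e' ∈ E, ∃ l : ℝ, 0 < l ∧ e = l • e')
    {f : R → ℝ} (hf : f ∈ fluxCone N Rirr) (hτ : ConformsSign f τ) :
    f ∈ PointedCone.hull ℝ E := by
  induction hs : support f using WellFoundedLT.induction generalizing f with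
  | ind s ih =>
    by_cases hf0 : f = 0
    · rw [hf0]
      exact zero_mem _
    obtain ⟨e, he, hef⟩ := exists_isEFM_conformsSign hf hf0
    obtain ⟨e', he'E, l, hl, rfl⟩ := hrep e he (hef.trans hτ)
    obtain ⟨r, hr⟩ := Function.ne_iff.1 he.2.1
    obtain ⟨t, ht, hconf, hlt⟩ := exists_pos_conformsSign_sub_smul hef.support_subset
      ⟨r, div_pos_of_sign_eq hr (conformsSign_iff.1 hef r hr)⟩
    have hmem : f - t • l • e' ∈ fluxCone N Rirr :=
      hconf.mem_fluxCone hf (by simp [Matrix.mulVec_sub, Matrix.mulVec_smul, hf.1, he.1.1])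
    have hrest := ih _ (hs ▸ hlt) hmem (hconf.trans hτ) rfl
    rw [← sub_add_cancel f (t • l • e')]
    exact add_mem hrest <| PointedCone.smul_mem _ ht.le <|
      PointedCone.smul_mem _ hl.le (PointedCone.subset_hull he'E)

end FluxCone

theorem flux_mode_nonneg_comb_of_representative_efms_general {S R : Type*}
    [Fintype R] (N : Matrix S R ℝ) (Rirr : Set R)
    (τ : R → SignType) (E : Finset (R → ℝ))
    (hrep : ∀ e : R → ℝ, IsEFM N Rirr e → ConformsSign e τ →
      ∃ e' ∈ E, ∃ l : ℝ, 0 < l ∧ e = l • e')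
    (f : R → ℝ) (hf : f ∈ fluxCone N Rirr) (hτ : ConformsSign f τ) :
    ∃ α : (R → ℝ) → ℝ, (∀ e ∈ E, 0 ≤ α e) ∧ f = ∑ e ∈ E, α e • e :=
  exists_nonneg_sum_smul_of_mem_hull (mem_hull_of_conformsSign hrep hf hτ)

/-- if `E` is a set of representative EFMs conforming to a sign
vector `τ` (one per positive ray), then every flux mode conforming to `τ` is a
nonnegative linear combination of elements of `E`. -/
theorem flux_mode_nonneg_comb_of_representative_efms {S R : Type*}
    [Fintype S] [Fintype R] (N : Matrix S R ℝ) (Rirr : Set R)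
    (τ : R → SignType) (E : Finset (R → ℝ))
    (hE : ∀ e ∈ E, IsEFM N Rirr e ∧ ConformsSign e τ)
    (hrep : ∀ e : R → ℝ, IsEFM N Rirr e → ConformsSign e τ →
      ∃ e' ∈ E, ∃ l : ℝ, 0 < l ∧ e = l • e')
    (f : R → ℝ) (hf : f ∈ fluxCone N Rirr) (hτ : ConformsSign f τ) :
    ∃ α : (R → ℝ) → ℝ, (∀ e ∈ E, 0 ≤ α e) ∧ f = ∑ e ∈ E, α e • e :=
  flux_mode_nonneg_comb_of_representative_efms_general N Rirr τ E hrep f hf hτ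
end

section
/- Duality of objective values (Lemma on problem reformulation): Let (x̄, c) be feasible for the enzyme allocation problem with c_r = 0 whenever v̄_r = 0 and v̄_{r*} > 0, and set f = v̄ / v̄_{r*}. Then f ∈ C, f_{r*} = 1, σ(f) ≤ σ(κ(x̄,p)), and v̄_{r*} · Σ_{r ∈ supp(κ)} w_r f_r / κ_r(x̄,p) = c^tot. Conversely, given (x̄, f) with f ∈ C, f_{r*} = 1, σ(f) ≤ σ(κ), defining v̄_{r*} = c^tot / (Σ_{r∈supp(κ)} w_r f_r/κ_r) and c_r = v̄_{r*} f_r/κ_r on supp(κ), c_r = 0 otherwise, yields a feasible solution of the enzyme allocation problem with steady-state flux v̄ = v̄_{r*} f. -/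
def Conforms {R : Type*} (x y : R → ℝ) : Prop :=
  ∀ r, x r = 0 ∨ (0 < x r ∧ 0 < y r) ∨ (x r < 0 ∧ y r < 0)

theorem smul_mem_fluxCone {S R : Type*} [Fintype R] {N : Matrix S R ℝ} {Rirr : Set R}
    {f : R → ℝ} (hf : f ∈ fluxCone N Rirr) {a : ℝ} (ha : 0 ≤ a) :
    a • f ∈ fluxCone N Rirr :=
  ⟨by rw [Matrix.mulVec_smul, hf.1, smul_zero], fun r hr => mul_nonneg ha (hf.2 r hr)⟩

theorem conforms_mul_of_nonneg {R : Type*} {c y : R → ℝ} (hc : ∀ r, 0 ≤ c r) :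
    Conforms (fun r => c r * y r) y := by
  intro r
  rcases (hc r).eq_or_lt with hc0 | hcpos
  · simp [← hc0]
  rcases lt_trichotomy (y r) 0 with hy | hy | hy
  · exact .inr (.inr ⟨mul_neg_of_pos_of_neg hcpos hy, hy⟩)
  · simp [hy]
  · exact .inr (.inl ⟨mul_pos hcpos hy, hy⟩)

theorem sum_mul_smul_div {R : Type*} [Fintype R] (w x y : R → ℝ) (a : ℝ) :
    ∑ r, w r * (a • x) r / y r = a * ∑ r, w r * x r / y r := by
  rw [Finset.mul_sum]
  exact Finset.sum_congr rfl fun r _ => by simp only [Pi.smul_apply, smul_eq_mul]; ring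

theorem sum_mul_mul_div_cancel {R : Type*} [Fintype R] {w c y : R → ℝ}
    (h : ∀ r, y r = 0 → c r = 0) : ∑ r, w r * (c r * y r) / y r = ∑ r, w r * c r :=
  Finset.sum_congr rfl fun r _ => by
    rw [← mul_assoc, mul_div_cancel_of_imp fun hy => by simp [h r hy]]

namespace Conforms

variable {R : Type*} {x y : R → ℝ}

theorem smul (h : Conforms x y) {a : ℝ} (ha : 0 < a) : Conforms (a • x) y := by
  intro r
  rcases h r with hx | ⟨hx, hy⟩ | ⟨hx, hy⟩
  · simp [hx]
  · exact .inr (.inl ⟨mul_pos ha hx, hy⟩)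
  · exact .inr (.inr ⟨mul_neg_of_pos_of_neg ha hx, hy⟩)

theorem eq_zero_of_eq_zero (h : Conforms x y) {r : R} (hy : y r = 0) : x r = 0 := by
  rcases h r with hx | ⟨-, hy'⟩ | ⟨-, hy'⟩
  · exact hx
  all_goals linarith

theorem div_mul_cancel (h : Conforms x y) (r : R) : x r / y r * y r = x r :=
  div_mul_cancel_of_imp h.eq_zero_of_eq_zero

theorem div_nonneg (h : Conforms x y) (r : R) : 0 ≤ x r / y r := by
  rcases h r with hx | ⟨hx, hy⟩ | ⟨hx, hy⟩
  · simp [hx]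
  · exact (div_pos hx hy).le
  · exact (div_pos_of_neg_of_neg hx hy).le

theorem sum_mul_div_pos [Fintype R] (h : Conforms x y) {w : R → ℝ} (hw : ∀ r, 0 < w r)
    {r₀ : R} (hx : x r₀ ≠ 0) : 0 < ∑ r, w r * x r / y r := by
  have hterm : ∀ r, 0 ≤ w r * x r / y r := fun r => by
    rw [mul_div_assoc]; exact mul_nonneg (hw r).le (h.div_nonneg r)
  have hy : y r₀ ≠ 0 := mt h.eq_zero_of_eq_zero hx
  have hne : w r₀ * x r₀ / y r₀ ≠ 0 := div_ne_zero (mul_ne_zero (hw r₀).ne' hx) hy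
  exact Finset.sum_pos' (fun r _ => hterm r) ⟨r₀, Finset.mem_univ _, (hterm r₀).lt_of_ne' hne⟩

end Conforms

/-- `Conforms f κ` forces `f r = 0` off `supp κ`, and `x / 0 = 0`, so the paper's sum over
`supp κ` is the sum over all reactions. -/
theorem enzyme_allocation_reformulation {S R : Type*} [Fintype S] [Fintype R]
    (N : Matrix S R ℝ) (Rirr : Set R) (κ : R → ℝ) (w : R → ℝ)
    (hw : ∀ r, 0 < w r) (ctot : ℝ) (hctot : 0 < ctot) (rstar : R) :
    -- forward direction
    (∀ c : R → ℝ, (∀ r, 0 ≤ c r) → (∑ r, w r * c r = ctot) →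
      (fun r => c r * κ r) ∈ fluxCone N Rirr →
      (∀ r, c r * κ r = 0 → c r = 0) →
      0 < c rstar * κ rstar →
      ∃ f : R → ℝ, f ∈ fluxCone N Rirr ∧ f rstar = 1 ∧ Conforms f κ ∧
        (∀ r, f r = c r * κ r / (c rstar * κ rstar)) ∧
        (c rstar * κ rstar) * ∑ r, w r * f r / κ r = ctot) ∧
    -- converse direction
    (∀ f : R → ℝ, f ∈ fluxCone N Rirr → f rstar = 1 → Conforms f κ →
      ∃ c : R → ℝ, ∃ vstar : ℝ,
        vstar = ctot / ∑ r, w r * f r / κ r ∧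
        (∀ r, c r = if κ r ≠ 0 then vstar * f r / κ r else 0) ∧
        (∀ r, 0 ≤ c r) ∧ (∑ r, w r * c r = ctot) ∧
        (fun r => c r * κ r) = (fun r => vstar * f r) ∧
        (fun r => c r * κ r) ∈ fluxCone N Rirr ∧
        0 < c rstar * κ rstar) := by
  constructor
  · intro c hc hsum hcone hsupp hpos
    set V := c rstar * κ rstar
    have hc_zero : ∀ r, κ r = 0 → c r = 0 := fun r hk => hsupp r (by simp [hk])
    refine ⟨V⁻¹ • fun r => c r * κ r, smul_mem_fluxCone hcone (inv_nonneg.2 hpos.le),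
      inv_mul_cancel₀ hpos.ne', (conforms_mul_of_nonneg hc).smul (inv_pos.2 hpos),
      fun r => inv_mul_eq_div _ _, ?_⟩
    rw [sum_mul_smul_div, sum_mul_mul_div_cancel hc_zero, mul_inv_cancel_left₀ hpos.ne', hsum]
  · intro f hf hf1 hconf
    set v := ctot / ∑ r, w r * f r / κ r
    have hS := hconf.sum_mul_div_pos hw (r₀ := rstar) (by simp [hf1])
    have hv : 0 < v := div_pos hctot hS
    have hflux : (fun r => v * f r / κ r * κ r) = v • f :=
      funext (hconf.smul hv).div_mul_cancel
    refine ⟨fun r => v * f r / κ r, v, rfl, fun r => ?_, fun r => ?_, ?_, hflux,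
      hflux ▸ smul_mem_fluxCone hf hv.le, ?_⟩
    · split_ifs with hk <;> simp_all
    · exact (hconf.smul hv).div_nonneg r
    · simp only [← mul_div_assoc]
      exact (sum_mul_smul_div w f κ v).trans (div_mul_cancel₀ ctot hS.ne')
    · rw [congrFun hflux rstar, Pi.smul_apply, hf1, smul_eq_mul, mul_one]
      exact hv
end
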